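/- Let n be even, a_1,…,a_n positive integers with a_n ≥ 2, N = a_1 + ⋯ + a_n − 1 and l_{n−1} = a_1 + ⋯ + a_{n−1}. Then F[a_1,…,a_n] = (1 + y_N)·F[a_1,…,a_{n−1}, a_n − 1] − y_N·F[a_1,…,a_{n−1}, a_n − 2], and F[a_1,…,a_n] = (Π_{i=l_{n−1}}^{N−1} y_i)(1 + y_N)·F[a_1,…,a_{n−1}] + F[a_1,…,a_{n−1}, a_n − 2], with the convention F[a_1,…,a_{n−1}, 0] = F[a_1,…,a_{n−2}]. -/

import Mathlib

/-!
Ancestral triangles of continued fractions (Yamada / Farey diagrams),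
following "Cluster variables and Alexander polynomials of 2-bridge knots".
-/

noncomputable section

open scoped BigOperators

attribute [local instance] Classical.propDecidable

namespace TwoBridge

/-- The continued fraction `[a₁,…,aₙ] = 1/(a₁ + 1/(a₂ + ⋯ + 1/aₙ))`. -/
def cf : List ℕ → ℚ
  | [] => 0
  | a :: t => 1 / ((a : ℚ) + cf t)

/-- Partial sums `l_k = a₁ + ⋯ + a_k`. -/
def ell (a : List ℕ) (k : ℕ) : ℕ := (a.take k).sum

/-- The index of the fan containing the `i`-th triangle (1-based): the least `k` with
`i ≤ l_k − 1`.  Fan 1 consists of `T_1, …, T_{a₁−1}` and, for `k ≥ 2`, fan `k` consists of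
`T_{l_{k−1}}, …, T_{l_k − 1}`. -/
def fanIdx (a : List ℕ) (i : ℕ) : ℕ := sInf {k | i < ell a k}

/-- The `i`-th triangle (1-based) of the ancestral triangle of `[a₁,…,aₙ]` is a *right*
triangle iff it lies in an odd-indexed fan (first `a₁ − 1` triangles are right, the next
`a₂` left, the next `a₃` right, and so on alternately). -/
def isRight (a : List ℕ) (i : ℕ) : Prop := Odd (fanIdx a i)

/-- Vertex indices of the ancestral triangle: `0 ↦ 0/1`, `1 ↦ 1/1`, and `j + 1 ↦` the apex
(new vertex) of the triangle `T_j`.  `edgeIdx a i` is the pair of vertex indices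
(left endpoint, right endpoint) of the most recently created edge after stacking `i`
triangles; the triangle `T_{i+1}` is stacked on this edge. -/
def edgeIdx (a : List ℕ) : ℕ → ℕ × ℕ
  | 0 => (0, 1)
  | i + 1 => if isRight a (i + 1) then ((edgeIdx a i).1, i + 2) else (i + 2, (edgeIdx a i).2)

/-- The labels (numerator, denominator) of the endpoints of the active edge after stacking
`i` triangles; the new vertex of each triangle is labelled by the mediant of the two
endpoints of the edge it is stacked on. -/
def edgeLbl (a : List ℕ) : ℕ → (ℕ × ℕ) × (ℕ × ℕ)
  | 0 => ((0, 1), (1, 1))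
  | i + 1 =>
      if isRight a (i + 1) then
        ((edgeLbl a i).1,
          ((edgeLbl a i).1.1 + (edgeLbl a i).2.1, (edgeLbl a i).1.2 + (edgeLbl a i).2.2))
      else
        (((edgeLbl a i).1.1 + (edgeLbl a i).2.1, (edgeLbl a i).1.2 + (edgeLbl a i).2.2),
          (edgeLbl a i).2)

/-- The label (numerator, denominator) of the vertex with index `v`. -/
def vtxLabel (a : List ℕ) (v : ℕ) : ℕ × ℕ :=
  if v = 0 then (0, 1)
  else if v = 1 then (1, 1)
  else ((edgeLbl a (v - 2)).1.1 + (edgeLbl a (v - 2)).2.1,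
        (edgeLbl a (v - 2)).1.2 + (edgeLbl a (v - 2)).2.2)

/-- `u` and `w` are joined by an edge of the ancestral triangle. -/
def IsEdgeAT (a : List ℕ) (u w : ℕ) : Prop :=
  (u = 0 ∧ w = 1) ∨ (u = 1 ∧ w = 0) ∨
    (2 ≤ u ∧ (w = (edgeIdx a (u - 2)).1 ∨ w = (edgeIdx a (u - 2)).2)) ∨
    (2 ≤ w ∧ (u = (edgeIdx a (w - 2)).1 ∨ u = (edgeIdx a (w - 2)).2))

/-- A step of a path: an edge of the ancestral triangle along which the denominator of the
vertex label strictly decreases. -/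
def IsStep (a : List ℕ) (u w : ℕ) : Prop :=
  IsEdgeAT a u w ∧ (vtxLabel a w).2 < (vtxLabel a u).2

/-- `IsPathFrom a s γ` : `γ` is a path of the ancestral triangle of `a` starting at the
vertex with index `s` and ending at `0/1` or `1/1`, the denominator of the label strictly
decreasing along every edge. -/
def IsPathFrom (a : List ℕ) (s : ℕ) (γ : List ℕ) : Prop :=
  γ.head? = some s ∧ (γ.getLast? = some 0 ∨ γ.getLast? = some 1) ∧ List.Chain' (IsStep a) γ

/-- The (indices of the) triangles cut off to the left of the path by a single step from
vertex `u` down to vertex `w`. -/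
def stepLeft (a : List ℕ) (u w : ℕ) : Finset ℕ :=
  if 2 ≤ u ∧ w = (edgeIdx a (u - 2)).2 then Finset.Ioc (w - 1) (u - 1) else ∅

/-- The set `S_γ` of (indices of) triangles lying on the left side of the path `γ`. -/
def pathLeftSet (a : List ℕ) (γ : List ℕ) : Finset ℕ :=
  (γ.zip γ.tail).foldr (fun p s => stepLeft a p.1 p.2 ∪ s) ∅


/-- The `F`-polynomial `F_{p/q} = Σ_{γ ∈ Γ_{p/q}} ∏_{T_i ∈ S_γ} y_i` of `p/q = [a₁,…,aₙ]`
(the variable `y_i` is `MvPolynomial.X i`; the top vertex has index `a.sum = N + 1`).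
For the empty continued fraction this gives `1`. -/
def Fpoly (a : List ℕ) : MvPolynomial ℕ ℤ :=
  ∑ᶠ γ ∈ {γ : List ℕ | IsPathFrom a a.sum γ},
    ∏ i ∈ pathLeftSet a γ, (MvPolynomial.X i : MvPolynomial ℕ ℤ)

/-- `F`-polynomial with the convention `F[a₁,…,a_{n−1},0] = F[a₁,…,a_{n−2}]`. -/
def FpolyC (l : List ℕ) : MvPolynomial ℕ ℤ :=
  if l.getLast? = some 0 then Fpoly l.dropLast.dropLast else Fpoly l

/-!
Write `l = l_{n-1}`. Since `n` is even, the last fan of `AT[a₁,…,aₙ]` consists of left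
triangles, all hinged at the vertex `l`, the top of `AT[a₁,…,a_{n-1}]`. A path from the top
vertex either steps to the previous top vertex, leaving a path of `AT[a₁,…,aₙ - 1]`, or steps
to `l`, cutting off every triangle `T_l, …, T_N` of the last fan and leaving a path of
`AT[a₁,…,a_{n-1}]`. Hence `F[…, x + 1] = F[…, x] + y_l ⋯ y_{l+x} F[a₁,…,a_{n-1}]`, and both
identities follow from two instances of this recursion.
-/

section PathSum

variable (a : List ℕ)

lemma edgeIdx_succ (i : ℕ) :
    edgeIdx a (i + 1) =
      if isRight a (i + 1) then ((edgeIdx a i).1, i + 2) else (i + 2, (edgeIdx a i).2) := rfl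

lemma edgeIdx_le_and_ne (i : ℕ) :
    (edgeIdx a i).1 ≤ i + 1 ∧ (edgeIdx a i).2 ≤ i + 1 ∧ (edgeIdx a i).1 ≠ (edgeIdx a i).2 := by
  induction i with
  | zero => simp [edgeIdx]
  | succ i ih => rw [edgeIdx_succ]; split <;> simp <;> omega

lemma vtxLabel_add_two (i : ℕ) :
    vtxLabel a (i + 2) =
      ((edgeLbl a i).1.1 + (edgeLbl a i).2.1, (edgeLbl a i).1.2 + (edgeLbl a i).2.2) := by
  simp [vtxLabel]

lemma edgeLbl_eq (i : ℕ) :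
    edgeLbl a i = (vtxLabel a (edgeIdx a i).1, vtxLabel a (edgeIdx a i).2) := by
  induction i with
  | zero => simp [edgeLbl, edgeIdx, vtxLabel]
  | succ i ih =>
    rw [edgeLbl, edgeIdx]
    split <;> simp [ih, vtxLabel_add_two]

lemma vtxLabel_snd_pos (v : ℕ) : 0 < (vtxLabel a v).2 := by
  have hpos : ∀ i, 0 < (edgeLbl a i).1.2 ∧ 0 < (edgeLbl a i).2.2 := by
    intro i
    induction i with
    | zero => simp [edgeLbl]
    | succ i ih => rw [edgeLbl]; split <;> simp <;> omega
  unfold vtxLabel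
  split_ifs
  · simp
  · simp
  · exact Nat.add_pos_left (hpos (v - 2)).1 _

/-- The apex of `T_{i+1}` is labelled by the mediant of the edge it is stacked on. -/
lemma vtxLabel_snd_lt_apex (i : ℕ) :
    (vtxLabel a (edgeIdx a i).1).2 < (vtxLabel a (i + 2)).2 ∧
      (vtxLabel a (edgeIdx a i).2).2 < (vtxLabel a (i + 2)).2 := by
  have hapex : (vtxLabel a (i + 2)).2 =
      (vtxLabel a (edgeIdx a i).1).2 + (vtxLabel a (edgeIdx a i).2).2 := by
    rw [vtxLabel_add_two, edgeLbl_eq]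
  have := vtxLabel_snd_pos a (edgeIdx a i).1
  have := vtxLabel_snd_pos a (edgeIdx a i).2
  omega

lemma not_isStep_of_le_one {u : ℕ} (hu : u ≤ 1) (w : ℕ) : ¬ IsStep a u w := by
  rintro ⟨-, hlt⟩
  have hu1 : (vtxLabel a u).2 = 1 := by interval_cases u <;> simp [vtxLabel]
  have := vtxLabel_snd_pos a w
  omega

lemma isStep_iff {s : ℕ} (hs : 2 ≤ s) (w : ℕ) :
    IsStep a s w ↔ w = (edgeIdx a (s - 2)).1 ∨ w = (edgeIdx a (s - 2)).2 := by
  obtain ⟨i, rfl⟩ : ∃ i, s = i + 2 := ⟨s - 2, by omega⟩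
  have hlt := vtxLabel_snd_lt_apex a i
  constructor
  · rintro ⟨hedge | hedge | ⟨-, hw⟩ | ⟨hw, hs'⟩, hden⟩
    · omega
    · omega
    · simpa using hw
    · -- `i + 2` would be an endpoint of the edge under `w`, whose denominator is larger
      obtain ⟨j, rfl⟩ : ∃ j, w = j + 2 := ⟨w - 2, by omega⟩
      have := vtxLabel_snd_lt_apex a j
      simp only [Nat.add_sub_cancel] at hs'
      rcases hs' with h | h <;> rw [h] at hden <;> omega
  · intro hw
    simp only [Nat.add_sub_cancel] at hw
    refine ⟨Or.inr (Or.inr (Or.inl ⟨by omega, by simpa using hw⟩)), ?_⟩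
    rcases hw with rfl | rfl <;> omega

lemma IsStep.lt {a : List ℕ} {u w : ℕ} (h : IsStep a u w) : w < u := by
  have hu : 2 ≤ u := by
    by_contra hu
    exact not_isStep_of_le_one a (by omega) w h
  have := edgeIdx_le_and_ne a (u - 2)
  rcases (isStep_iff a hu w).mp h with rfl | rfl <;> omega

def pathWeight (γ : List ℕ) : MvPolynomial ℕ ℤ :=
  ∏ i ∈ pathLeftSet a γ, (MvPolynomial.X i : MvPolynomial ℕ ℤ)

def pathSum (s : ℕ) : MvPolynomial ℕ ℤ :=
  ∑ᶠ γ ∈ {γ : List ℕ | IsPathFrom a s γ}, pathWeight a γ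

lemma Fpoly_eq_pathSum : Fpoly a = pathSum a a.sum := rfl

lemma isPathFrom_iff {s : ℕ} {γ : List ℕ} :
    IsPathFrom a s γ ↔ γ.head? = some s ∧ (γ.getLast? = some 0 ∨ γ.getLast? = some 1) ∧
      List.IsChain (IsStep a) γ :=
  Iff.rfl

lemma isPathFrom_nil (s : ℕ) : ¬ IsPathFrom a s [] := by
  simp [isPathFrom_iff]

lemma isPathFrom_singleton {s u : ℕ} : IsPathFrom a s [u] ↔ u = s ∧ s ≤ 1 := by
  simp only [isPathFrom_iff, List.head?_cons, List.getLast?_singleton,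
    Option.some.injEq, List.isChain_singleton, and_true]
  omega

lemma isPathFrom_cons {s w : ℕ} {t : List ℕ} :
    IsPathFrom a s (w :: t) ↔ w = s ∧ IsPathFrom a w (w :: t) := by
  simp [isPathFrom_iff]

lemma isPathFrom_cons_cons {s u w : ℕ} {t : List ℕ} :
    IsPathFrom a s (u :: w :: t) ↔ u = s ∧ IsStep a u w ∧ IsPathFrom a w (w :: t) := by
  simp only [isPathFrom_iff, List.head?_cons, Option.some.injEq, List.getLast?_cons_cons,
    List.isChain_cons_cons]
  tauto

lemma setOf_isPathFrom_of_le_one {v : ℕ} (hv : v ≤ 1) :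
    {γ : List ℕ | IsPathFrom a v γ} = {[v]} := by
  ext γ
  rcases γ with _ | ⟨u, _ | ⟨w, t⟩⟩
  · simp [isPathFrom_nil]
  · simp [isPathFrom_singleton, hv]
  · simp only [Set.mem_ofPred_eq, isPathFrom_cons_cons, Set.mem_singleton_iff, List.cons.injEq,
      reduceCtorEq, and_false, iff_false]
    rintro ⟨rfl, hstep, -⟩
    exact not_isStep_of_le_one a hv w hstep

lemma setOf_isPathFrom_eq_image {s : ℕ} (hs : 2 ≤ s) :
    {γ : List ℕ | IsPathFrom a s γ} =
      (s :: ·) '' ({γ | IsPathFrom a (edgeIdx a (s - 2)).1 γ} ∪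
        {γ | IsPathFrom a (edgeIdx a (s - 2)).2 γ}) := by
  ext γ
  rcases γ with _ | ⟨u, _ | ⟨w, t⟩⟩
  · simp [isPathFrom_nil]
  · simp [isPathFrom_singleton, isPathFrom_nil]
    omega
  · simp only [Set.mem_ofPred_eq, isPathFrom_cons_cons, Set.mem_image, Set.mem_union,
      List.cons.injEq]
    constructor
    · rintro ⟨rfl, hw, hpath⟩
      refine ⟨w :: t, ?_, rfl, rfl⟩
      rcases (isStep_iff a hs w).mp hw with rfl | rfl <;> simp [isPathFrom_cons, hpath]
    · rintro ⟨t', ht', rfl, rfl⟩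
      have hw : w = (edgeIdx a (s - 2)).1 ∨ w = (edgeIdx a (s - 2)).2 := by
        rcases ht' with h | h <;> simp [(isPathFrom_cons a).mp h]
      refine ⟨rfl, (isStep_iff a hs w).mpr hw, ?_⟩
      rcases ht' with h | h <;> exact ((isPathFrom_cons a).mp h).2

lemma setOf_isPathFrom_finite (s : ℕ) : {γ : List ℕ | IsPathFrom a s γ}.Finite := by
  induction s using Nat.strong_induction_on with
  | _ s ih =>
    rcases Nat.lt_or_ge s 2 with hs | hs
    · rw [setOf_isPathFrom_of_le_one a (by omega)]
      exact Set.finite_singleton _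
    · have := edgeIdx_le_and_ne a (s - 2)
      rw [setOf_isPathFrom_eq_image a hs]
      exact ((ih _ (by omega)).union (ih _ (by omega))).image _

lemma stepLeft_subset (u w : ℕ) : stepLeft a u w ⊆ Finset.Ioc (w - 1) (u - 1) := by
  unfold stepLeft
  split_ifs
  · exact subset_rfl
  · exact Finset.empty_subset _

lemma pathLeftSet_subset_Iio {w : ℕ} {t : List ℕ} (h : List.IsChain (IsStep a) (w :: t)) :
    pathLeftSet a (w :: t) ⊆ Finset.Iio w := by
  induction t generalizing w with
  | nil => exact Finset.empty_subset _
  | cons u t ih =>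
    replace h := List.isChain_cons_cons.mp h
    have hlt := h.1.lt
    intro i hi
    rcases Finset.mem_union.mp hi with hi | hi
    · have := stepLeft_subset a w u hi
      simp only [Finset.mem_Ioc, Finset.mem_Iio] at this ⊢
      omega
    · exact Finset.mem_Iio.mpr (lt_trans (Finset.mem_Iio.mp (ih h.2 hi)) hlt)

lemma pathWeight_cons_cons {s w : ℕ} {t : List ℕ} (h : List.IsChain (IsStep a) (w :: t)) :
    pathWeight a (s :: w :: t) =
      (∏ i ∈ stepLeft a s w, (MvPolynomial.X i : MvPolynomial ℕ ℤ)) * pathWeight a (w :: t) := by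
  refine Finset.prod_union (Finset.disjoint_left.mpr fun i hi hi' => ?_)
  have h1 := stepLeft_subset a s w hi
  have h2 := pathLeftSet_subset_Iio a h hi'
  simp only [Finset.mem_Ioc, Finset.mem_Iio] at h1 h2
  omega

lemma stepLeft_fst (s : ℕ) : stepLeft a s (edgeIdx a (s - 2)).1 = ∅ :=
  if_neg fun h => (edgeIdx_le_and_ne a (s - 2)).2.2 h.2

lemma stepLeft_snd {s : ℕ} (hs : 2 ≤ s) :
    stepLeft a s (edgeIdx a (s - 2)).2 = Finset.Ioc ((edgeIdx a (s - 2)).2 - 1) (s - 1) :=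
  if_pos ⟨hs, rfl⟩

lemma pathSum_of_le_one {v : ℕ} (hv : v ≤ 1) : pathSum a v = 1 := by
  rw [pathSum, setOf_isPathFrom_of_le_one a hv, finsum_mem_singleton]
  rfl

/-- Every path from `s ≥ 2` first steps down to one of the two endpoints of the edge `T_{s-1}`
is stacked on; only the step to the right endpoint cuts off triangles on its left. -/
lemma pathSum_eq_add {s : ℕ} (hs : 2 ≤ s) :
    pathSum a s = pathSum a (edgeIdx a (s - 2)).1 +
      (∏ i ∈ Finset.Ioc ((edgeIdx a (s - 2)).2 - 1) (s - 1), (MvPolynomial.X i : MvPolynomial ℕ ℤ)) *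
        pathSum a (edgeIdx a (s - 2)).2 := by
  have hstep : ∀ e, ∑ᶠ t ∈ {γ | IsPathFrom a e γ}, pathWeight a (s :: t) =
      (∏ i ∈ stepLeft a s e, (MvPolynomial.X i : MvPolynomial ℕ ℤ)) * pathSum a e := by
    intro e
    rw [pathSum, mul_finsum_mem]
    refine finsum_mem_congr rfl fun t ht => ?_
    rcases t with _ | ⟨w, t⟩
    · exact absurd ht (isPathFrom_nil a e)
    · obtain ⟨rfl, hpath⟩ := (isPathFrom_cons a).mp ht
      exact pathWeight_cons_cons a hpath.2.2
  have hne := (edgeIdx_le_and_ne a (s - 2)).2.2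
  have hdisj : Disjoint {γ | IsPathFrom a (edgeIdx a (s - 2)).1 γ}
      {γ | IsPathFrom a (edgeIdx a (s - 2)).2 γ} := by
    refine Set.disjoint_left.mpr fun γ h1 h2 => hne ?_
    simpa [h1.1] using h2.1
  rw [pathSum, setOf_isPathFrom_eq_image a hs,
    finsum_mem_image fun _ _ _ _ h => List.cons_injective h,
    finsum_mem_union hdisj (setOf_isPathFrom_finite a _) (setOf_isPathFrom_finite a _),
    hstep, hstep, stepLeft_fst a s, stepLeft_snd a hs, Finset.prod_empty, one_mul]

lemma edgeIdx_congr {b : List ℕ} {i : ℕ} (h : ∀ j ≤ i, fanIdx a j = fanIdx b j) :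
    edgeIdx a i = edgeIdx b i := by
  induction i with
  | zero => rfl
  | succ i ih =>
    rw [edgeIdx_succ, edgeIdx_succ, ih fun j hj => h j (by omega), isRight, isRight,
      h (i + 1) le_rfl]

lemma pathSum_congr {b : List ℕ} {v : ℕ} (h : ∀ j, j + 2 ≤ v → fanIdx a j = fanIdx b j) :
    pathSum a v = pathSum b v := by
  induction v using Nat.strong_induction_on with
  | _ v ih =>
    rcases Nat.lt_or_ge v 2 with hv | hv
    · rw [pathSum_of_le_one a (by omega), pathSum_of_le_one b (by omega)]
    · have hedge : edgeIdx a (v - 2) = edgeIdx b (v - 2) :=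
        edgeIdx_congr a fun j hj => h j (by omega)
      have := edgeIdx_le_and_ne a (v - 2)
      rw [pathSum_eq_add a hv, pathSum_eq_add b hv, ← hedge,
        ih _ (by omega) fun j hj => h j (by omega), ih _ (by omega) fun j hj => h j (by omega)]

end PathSum

section Fans

variable (a : List ℕ)

lemma ell_zero : ell a 0 = 0 := by simp [ell]

lemma ell_of_length_le {k : ℕ} (hk : a.length ≤ k) : ell a k = a.sum := by
  rw [ell, List.take_of_length_le hk]

lemma ell_mono : Monotone (ell a) := List.monotone_sum_take a

lemma ell_append (b c : List ℕ) (k : ℕ) : ell (b ++ c) k = ell b k + ell c (k - b.length) := by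
  simp [ell, List.take_append]

lemma ell_lt_ell_succ (hpos : ∀ x ∈ a, 0 < x) {k : ℕ} (hk : k < a.length) :
    ell a k < ell a (k + 1) := by
  rw [ell, ell, List.sum_take_succ _ _ hk]
  have := hpos _ (List.getElem_mem hk)
  omega

lemma lt_length_of_ell_lt {m k : ℕ} (h : ell a m < ell a k) : m < a.length := by
  by_contra! hm
  have hk := ell_mono a (le_max_left k a.length)
  rw [ell_of_length_le a (le_max_right k a.length)] at hk
  rw [ell_of_length_le a hm] at h
  omega

lemma fanIdx_eq {k j : ℕ} (h1 : ell a (k - 1) ≤ j) (h2 : j < ell a k) : fanIdx a j = k := by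
  refine le_antisymm (Nat.sInf_le h2) (le_csInf ⟨k, h2⟩ fun m hm => ?_)
  by_contra! hmk
  have := ell_mono a (show m ≤ k - 1 by omega)
  exact (show ¬ j < ell a m by omega) hm

lemma fanIdx_congr {b : List ℕ} {j : ℕ} (h : ∀ k, j < ell a k ↔ j < ell b k) :
    fanIdx a j = fanIdx b j :=
  congrArg sInf (Set.ext h)

lemma fanIdx_append (b c : List ℕ) {j : ℕ} (hj : j < b.sum) : fanIdx (b ++ c) j = fanIdx b j := by
  refine fanIdx_congr _ fun k => ?_
  rw [ell_append]
  rcases le_or_gt b.length k with hk | hk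
  · rw [ell_of_length_le b hk]
    omega
  · rw [Nat.sub_eq_zero_of_le hk.le, ell_zero, add_zero]

/-- Inside the `k`-th fan the newest vertex is joined to the fixed vertex `l_{k-1}`, on the left
in an odd (right-triangle) fan and on the right in an even one. -/
lemma edgeIdx_of_mem_fan (hpos : ∀ x ∈ a, 0 < x) {k j : ℕ} (h1 : ell a (k - 1) ≤ j)
    (h2 : j < ell a k) :
    edgeIdx a j = if Odd k then (ell a (k - 1), j + 1) else (j + 1, ell a (k - 1)) := by
  induction j generalizing k with
  | zero =>
    -- only the first fan starts at `l_{k-1} = 0`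
    obtain rfl : k = 1 := by
      have hlen := lt_length_of_ell_lt a (show ell a (k - 1) < ell a k by omega)
      have h01 := ell_lt_ell_succ a hpos (k := 0) (by omega)
      rw [ell_zero, zero_add] at h01
      rcases Nat.lt_or_ge k 2 with hk | hk
      · rcases k with _ | _ | k
        · rw [ell_zero] at h2; omega
        · rfl
        · omega
      · have := ell_mono a (show 1 ≤ k - 1 by omega)
        omega
    simp [edgeIdx, ell_zero]
  | succ j ih =>
    rw [edgeIdx_succ, isRight, fanIdx_eq a h1 h2]
    rcases Nat.lt_or_ge (ell a (k - 1)) (j + 1) with hj | hj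
    · rw [ih (k := k) (by omega) (by omega)]
      split_ifs <;> simp
    · -- `T_{j+1}` opens fan `k`, and `T_j` closes fan `k - 1`
      obtain ⟨m, rfl⟩ : ∃ m, k = m + 2 := by
        refine ⟨k - 2, ?_⟩
        have : k - 1 ≠ 0 := fun hk => by rw [hk, ell_zero] at hj; omega
        omega
      rw [show m + 2 - 1 = m + 1 by omega] at h1 hj ⊢
      have hm := lt_length_of_ell_lt a (show ell a (m + 1) < ell a (m + 2) by omega)
      have := ell_lt_ell_succ a hpos (k := m) (by omega)
      rw [ih (k := m + 1) (by simp; omega) (by omega)]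
      have hpar : Odd (m + 2) ↔ ¬ Odd (m + 1) := Nat.odd_add_one
      by_cases hodd : Odd (m + 1)
      · simp [hodd, hpar]
        omega
      · simp [hodd, hpar]
        omega

lemma ell_length_sub_one : ell a (a.length - 1) = a.dropLast.sum := by
  rw [ell, List.dropLast_eq_take]

lemma edgeIdx_sum_sub_one (hpos : ∀ x ∈ a, 0 < x) (ha : a ≠ []) :
    edgeIdx a (a.sum - 1) =
      if Odd a.length then (a.dropLast.sum, a.sum) else (a.sum, a.dropLast.sum) := by
  have hlen : 0 < a.length := List.length_pos_of_ne_nil ha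
  have hlt := ell_lt_ell_succ a hpos (k := a.length - 1) (by omega)
  rw [Nat.sub_add_cancel hlen, ell_length_sub_one, ell_of_length_le a le_rfl] at hlt
  rw [edgeIdx_of_mem_fan a hpos (k := a.length)
    (by rw [ell_length_sub_one]; omega) (by rw [ell_of_length_le a le_rfl]; omega),
    ell_length_sub_one, Nat.sub_add_cancel (by omega)]

lemma fanIdx_append_singleton_succ (b : List ℕ) {x j : ℕ} (hj : j < b.sum + x) :
    fanIdx (b ++ [x + 1]) j = fanIdx (b ++ [x]) j := by
  refine fanIdx_congr _ fun k => ?_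
  rw [ell_append, ell_append]
  rcases Nat.eq_zero_or_eq_succ_pred (k - b.length) with hk | hk
  · rw [hk, ell_zero, ell_zero]
  · rw [hk, ell_of_length_le b (by omega)]
    simp [ell]
    omega

end Fans

lemma pathSum_append (b c : List ℕ) {v : ℕ} (hv : v ≤ b.sum + 1) :
    pathSum (b ++ c) v = pathSum b v :=
  pathSum_congr _ fun _ _ => fanIdx_append b c (by omega)

lemma pathSum_append_singleton_succ (b : List ℕ) (x : ℕ) :
    pathSum (b ++ [x + 1]) (b.sum + x) = Fpoly (b ++ [x]) := by
  rw [Fpoly_eq_pathSum, List.sum_append_nat, List.sum_singleton]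
  exact pathSum_congr _ fun j hj => fanIdx_append_singleton_succ b (by omega)

lemma Fpoly_append_succ {as : List ℕ} (hpos : ∀ x ∈ as, 0 < x) (hodd : Odd as.length) (x : ℕ) :
    Fpoly (as ++ [x + 1]) = FpolyC (as ++ [x]) +
      (∏ i ∈ Finset.Icc as.sum (as.sum + x), (MvPolynomial.X i : MvPolynomial ℕ ℤ)) * Fpoly as := by
  have hne : as ≠ [] := List.ne_nil_of_length_pos hodd.pos
  have hsum : 0 < as.sum := List.sum_pos as hpos hne
  obtain ⟨e, hedge, he⟩ : ∃ e, edgeIdx (as ++ [x + 1]) (as.sum + x - 1) = (e, as.sum) ∧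
      pathSum (as ++ [x + 1]) e = FpolyC (as ++ [x]) := by
    rcases x with _ | y
    · refine ⟨as.dropLast.sum, ?_, ?_⟩
      · rw [edgeIdx_congr _ fun j hj => fanIdx_append as _ (by omega), Nat.add_zero,
          edgeIdx_sum_sub_one as hpos hne, if_pos hodd]
      · have hsplit : as ++ [0 + 1] = as.dropLast ++ [as.getLast hne, 1] := by
          conv_lhs => rw [← List.dropLast_append_getLast hne]
          simp
        rw [hsplit, pathSum_append _ _ le_self_add]
        simp [FpolyC, Fpoly_eq_pathSum]
    · refine ⟨as.sum + y + 1, ?_, ?_⟩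
      · have hpos' : ∀ z ∈ as ++ [y + 1], 0 < z := by
          simpa [or_imp, forall_and] using hpos
        rw [show as.sum + (y + 1) - 1 = (as ++ [y + 1]).sum - 1 by simp,
          edgeIdx_congr _ fun j hj => fanIdx_append_singleton_succ as (by simp at hj; omega),
          edgeIdx_sum_sub_one _ hpos' (by simp), if_neg (by simpa [Nat.odd_add_one] using hodd)]
        simp [add_assoc]
      · rw [FpolyC, if_neg (by simp), ← pathSum_append_singleton_succ]
        rfl
  have hIoc : Finset.Ioc (as.sum - 1) (as.sum + x + 1 - 1) = Finset.Icc as.sum (as.sum + x) := by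
    ext i
    simp only [Finset.mem_Ioc, Finset.mem_Icc]
    omega
  rw [Fpoly_eq_pathSum, show (as ++ [x + 1]).sum = as.sum + x + 1 by simp [add_assoc],
    pathSum_eq_add _ (by omega), show as.sum + x + 1 - 2 = as.sum + x - 1 by omega, hedge, he,
    hIoc, pathSum_append _ _ (by omega), Fpoly_eq_pathSum]

/-- **Corollary.**  Let `n` be even, `a₁,…,aₙ` positive integers with `aₙ ≥ 2` (the first
`n − 1` entries form the list `as`, `aₙ = an`), `N = a₁ + ⋯ + aₙ − 1` and
`l_{n−1} = a₁ + ⋯ + a_{n−1}`.  Then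
`F[a₁,…,aₙ] = (1 + y_N)·F[a₁,…,a_{n−1}, aₙ − 1] − y_N·F[a₁,…,a_{n−1}, aₙ − 2]` and
`F[a₁,…,aₙ] = (∏_{i=l_{n−1}}^{N−1} y_i)(1 + y_N)·F[a₁,…,a_{n−1}] + F[a₁,…,a_{n−1}, aₙ − 2]`,
with the convention `F[a₁,…,a_{n−1}, 0] = F[a₁,…,a_{n−2}]` (realized by `FpolyC`). -/
theorem F_polynomial_recursion_even (as : List ℕ) (an : ℕ)
    (hpos : ∀ x ∈ as, 0 < x) (han : 2 ≤ an) (heven : Even (as.length + 1)) :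
    Fpoly (as ++ [an]) =
        (1 + MvPolynomial.X ((as ++ [an]).sum - 1)) * Fpoly (as ++ [an - 1]) -
          MvPolynomial.X ((as ++ [an]).sum - 1) * FpolyC (as ++ [an - 2]) ∧
    Fpoly (as ++ [an]) =
        (∏ i ∈ Finset.Icc as.sum ((as ++ [an]).sum - 2),
            (MvPolynomial.X i : MvPolynomial ℕ ℤ)) *
            (1 + MvPolynomial.X ((as ++ [an]).sum - 1)) * Fpoly as +
          FpolyC (as ++ [an - 2]) := by
  obtain ⟨m, rfl⟩ : ∃ m, an = m + 2 := ⟨an - 2, by omega⟩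
  have hodd : Odd as.length := by simpa [Nat.even_add_one] using heven
  have hsucc : Fpoly (as ++ [m + 2]) = Fpoly (as ++ [m + 1]) +
      (∏ i ∈ Finset.Icc as.sum (as.sum + m), (MvPolynomial.X i : MvPolynomial ℕ ℤ)) *
        MvPolynomial.X (as.sum + m + 1) * Fpoly as := by
    rw [Fpoly_append_succ hpos hodd (m + 1), FpolyC, if_neg (by simp), ← add_assoc,
      Finset.prod_Icc_succ_top (by omega)]
  have hprev := Fpoly_append_succ hpos hodd m
  simp only [List.sum_append, List.sum_singleton, show m + 2 - 1 = m + 1 from rfl,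
    show m + 2 - 2 = m from rfl, show as.sum + (m + 2) - 1 = as.sum + m + 1 by omega,
    show as.sum + (m + 2) - 2 = as.sum + m by omega]
  rw [hsucc, hprev]
  constructor <;> ring

end TwoBridge

end
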